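/- Let I be an index type and for each i : I let fᵢ : Set X → Set X be monotone. Define f : Set X → Set X by f S = ⋃_{i : I} fᵢ (gfp b) (that is, f is the pointwise join of the functions fᵢ ∘ const (gfp b)). Suppose that for each i : I there exists a monotone gᵢ : Set X → Set X lying below the companion t of b (gᵢ S ⊆ t S for every S) such that fᵢ (gfp b) ⊆ b ((f ⊔ gᵢ)^ω (gfp b)), where (f ⊔ gᵢ) S = f S ∪ gᵢ S. Then f is b-sound: gfp (b ∘ f) ⊆ gfp b. -/
import Mathlib


variable {X : Type*}

/-- The greatest fixed point of a monotone function on sets: union of all post-fixed points. -/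
def gfp (h : Set X → Set X) : Set X := ⋃₀ {S | S ⊆ h S}

/-- `f` progresses to `g` with respect to `b`. -/
def Progresses (b f g : Set X → Set X) : Prop := ∀ S, f (b S) ⊆ b (g S)

/-- `f` is `b`-compatible: `f` progresses to itself. -/
def Compatible (b f : Set X → Set X) : Prop := Progresses b f f

/-- The companion of `b`: pointwise join of all monotone `b`-compatible functions. -/
def companion (b : Set X → Set X) (S : Set X) : Set X :=
  ⋃₀ {T | ∃ f : Set X → Set X, Monotone f ∧ Compatible b f ∧ T = f S}


/-- `f^ω S = ⋃ n, f^[n] S`. -/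
def omegaIter (f : Set X → Set X) (S : Set X) : Set X := ⋃ n : ℕ, f^[n] S

section Aux

variable {b : Set X → Set X}

lemma le_gfp' {S : Set X} (h : S ⊆ b S) : S ⊆ gfp b :=
  Set.subset_sUnion_of_mem h

lemma gfp_postfixed' (hb : Monotone b) : gfp b ⊆ b (gfp b) := by
  intro x hx
  obtain ⟨S, hS, hxS⟩ := hx
  exact hb (le_gfp' hS) (hS hxS)

lemma mem_companion' {h : Set X → Set X} (hm : Monotone h) (hc : Compatible b h)
    (S : Set X) : h S ⊆ companion b S :=
  Set.subset_sUnion_of_mem ⟨h, hm, hc, rfl⟩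

lemma companion_mono' : Monotone (companion b) := by
  intro S S' hSS' x hx
  obtain ⟨T, ⟨g, hm, hc, rfl⟩, hxT⟩ := hx
  exact mem_companion' hm hc S' (hm hSS' hxT)

lemma companion_compat' (hb : Monotone b) : Compatible b (companion b) := by
  intro S x hx
  obtain ⟨T, ⟨g, hm, hc, rfl⟩, hxT⟩ := hx
  exact hb (mem_companion' hm hc S) (hc S hxT)

lemma le_companion' (S : Set X) : S ⊆ companion b S :=
  mem_companion' (b := b) monotone_id (fun _ => subset_rfl) S

lemma companion_idem' (hb : Monotone b) (S : Set X) :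
    companion b (companion b S) ⊆ companion b S := by
  have hm : Monotone (companion b ∘ companion b) :=
    companion_mono'.comp companion_mono'
  have hc : Compatible b (companion b ∘ companion b) := fun S =>
    (companion_mono' (companion_compat' hb S)).trans (companion_compat' hb (companion b S))
  exact mem_companion' hm hc S

lemma iterate_le' {f g : Set X → Set X} (hg : Monotone g) (hfg : ∀ S, f S ⊆ g S)
    (S : Set X) : ∀ n, f^[n] S ⊆ g^[n] S := by
  intro n
  induction n with
  | zero => simp
  | succ n ih =>
    rw [Function.iterate_succ_apply', Function.iterate_succ_apply']
    exact (hfg _).trans (hg ih)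

end Aux

theorem join_const_gfp_sound {X : Type*} {I : Type*} (b : Set X → Set X) (hb : Monotone b)
    (f₀ : I → Set X → Set X) (hf₀ : ∀ i, Monotone (f₀ i))
    (f : Set X → Set X) (hfdef : ∀ S : Set X, f S = ⋃ i : I, f₀ i (gfp b))
    (h : ∀ i : I, ∃ g : Set X → Set X, Monotone g ∧ (∀ S : Set X, g S ⊆ companion b S) ∧
        f₀ i (gfp b) ⊆ b (omegaIter (fun S => f S ∪ g S) (gfp b))) :
    gfp (b ∘ f) ⊆ gfp b := by
  set ν := gfp b with hν
  set t := companion b with ht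
  set F : Set X := ⋃ i : I, f₀ i ν with hF
  set ft : Set X → Set X := fun S => f S ∪ t S with hft
  set W : Set X := omegaIter ft ν with hW
  set V : Set X := t W with hV
  have hνbν : ν ⊆ b ν := gfp_postfixed' hb
  have hbνν : b ν ⊆ ν := le_gfp' (hb hνbν)
  have htV : t V ⊆ V := companion_idem' hb W
  have hWV : W ⊆ V := le_companion' W
  have hνW : ν ⊆ W := fun x hx => Set.mem_iUnion.mpr ⟨0, hx⟩
  have hftmono : Monotone ft := by
    intro S S' hSS'
    simp only [hft, hfdef]
    exact Set.union_subset_union subset_rfl (companion_mono' hSS')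
  -- F ⊆ b W
  have hFbW : F ⊆ b W := by
    intro x hx
    obtain ⟨i, hxi⟩ := Set.mem_iUnion.mp hx
    obtain ⟨g, hgmono, hgt, hsub⟩ := h i
    refine hb ?_ (hsub hxi)
    intro y hy
    obtain ⟨n, hyn⟩ := Set.mem_iUnion.mp hy
    refine Set.mem_iUnion.mpr ⟨n, ?_⟩
    refine iterate_le' hftmono (fun S => ?_) ν n hyn
    exact Set.union_subset_union subset_rfl (hgt S)
  -- each iterate lands in b V
  have hWbV : ∀ n, ft^[n] ν ⊆ b V := by
    intro n
    induction n with
    | zero =>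
      simpa using hνbν.trans (hb (hνW.trans hWV))
    | succ n ih =>
      rw [Function.iterate_succ_apply']
      apply Set.union_subset
      · rw [hfdef]
        exact hFbW.trans (hb hWV)
      · calc t (ft^[n] ν) ⊆ t (b V) := companion_mono' ih
          _ ⊆ b (t V) := companion_compat' hb V
          _ ⊆ b V := hb htV
  have hWbV' : W ⊆ b V := Set.iUnion_subset hWbV
  have hVν : V ⊆ ν := by
    apply le_gfp'
    calc V = t W := rfl
      _ ⊆ t (b V) := companion_mono' hWbV'
      _ ⊆ b (t V) := companion_compat' hb V
      _ ⊆ b V := hb htV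
  have hFν : F ⊆ ν := hFbW.trans ((hb (hWV.trans hVν)).trans hbνν)
  intro x hx
  obtain ⟨S, hS, hxS⟩ := hx
  have hx' : x ∈ b F := by
    have := hS hxS
    simpa [Function.comp, hfdef S] using this
  exact hbνν (hb hFν hx')
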